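/- arXiv:1707.07222 — 9 statements merged into one kernel-verified Lean document; each statement's English description precedes it below -/
import Mathlib

section
/- Let P be a finite poset with n elements and let x and y be two incomparable elements of P. Then for any two distinct integers p ≠ q both belonging to the possible ranks pr_P(x, y), there exists a linear extension of P in which x occurs at position p and y occurs at position q. -/
/-!
List the elements of `P - {x, y}` as: those below `x` or `y`, then those incomparable to both,
then those above `x` or `y`, each block sorted along a linear extension. No element of a later
block lies below one of an earlier block, so this is a linear extension of `P - {x, y}`. Inserting
`x` and `y` at positions `p < q` of `[a + 1, n - d]` keeps the `a` elements below them in front and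
the `d` elements above them behind, and everything in between is incomparable to both.
-/

/-- `e` is a linear extension of the finite poset `α`: an enumeration of all
elements such that `e i < e j` implies `i < j`. -/
def IsLinearExtension {α : Type*} [Fintype α] [PartialOrder α]
    (e : Fin (Fintype.card α) ≃ α) : Prop :=
  ∀ i j : Fin (Fintype.card α), e i < e j → i < j

open Set

section LinearExtensionLists

variable {α : Type*}

theorem List.pairwise_append_cons_append_cons {R : α → α → Prop} {B C D : List α} {a b : α}
    (h : (B ++ C ++ D).Pairwise R) (hab : R a b)
    (hBC : ∀ u ∈ B ++ C, R u a ∧ R u b) (hCD : ∀ v ∈ C ++ D, R a v ∧ R b v) :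
    (B ++ a :: C ++ b :: D).Pairwise R := by
  simp only [List.pairwise_append, List.pairwise_cons, List.mem_append, List.mem_cons] at *
  grind

theorem List.Nodup.length_eq_card [Fintype α] {l : List α} (hnd : l.Nodup) (hmem : ∀ z, z ∈ l) :
    l.length = Fintype.card α := by
  classical
  simpa using Fintype.card_congr (hnd.getEquivOfForallMemList l hmem)

theorem List.length_add_two_eq_card [Fintype α] {x y : α} {L : List α} (hnd : L.Nodup)
    (hmem : ∀ z, z ∈ L ↔ z ≠ x ∧ z ≠ y) (hxy : x ≠ y) : L.length + 2 = Fintype.card α := by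
  have hnd' : (x :: y :: L).Nodup := by simp [hmem, hxy, hnd]
  simpa using hnd'.length_eq_card fun z => by by_cases z = x <;> by_cases z = y <;> simp_all

variable [PartialOrder α]

theorem List.Pairwise.nodup_of_not_le {l : List α} (hl : l.Pairwise (fun u v => ¬ v ≤ u)) :
    l.Nodup :=
  hl.imp fun h heq => h heq.ge

theorem Finset.exists_toFinset_eq_pairwise_not_le [DecidableEq α] (s : Finset α) :
    ∃ l : List α, l.toFinset = s ∧ l.Pairwise (fun u v => ¬ v ≤ u) := by
  induction s using Finset.strongInduction with
  | H s ih =>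
    rcases s.eq_empty_or_nonempty with rfl | hs
    · exact ⟨[], rfl, .nil⟩
    obtain ⟨m, hm⟩ := s.exists_maximal hs
    obtain ⟨l, hl, hpw⟩ := ih (s.erase m) (s.erase_ssubset hm.prop)
    refine ⟨l ++ [m], by simp [hl, Finset.insert_erase hm.prop], ?_⟩
    refine List.pairwise_append.2 ⟨hpw, List.pairwise_singleton _ _, fun u hu v hv hvu => ?_⟩
    rw [List.mem_singleton.1 hv] at hvu
    rw [← List.mem_toFinset, hl, Finset.mem_erase] at hu
    exact hu.1 (le_antisymm (hm.2 hu.2 hvu) hvu)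

theorem Set.exists_list_pairwise_not_le [Fintype α] (s : Set α) :
    ∃ l : List α, l.Pairwise (fun u v => ¬ v ≤ u) ∧ (∀ z, z ∈ l ↔ z ∈ s) ∧ l.length = s.ncard := by
  classical
  obtain ⟨l, hl, hpw⟩ := s.toFinset.exists_toFinset_eq_pairwise_not_le
  refine ⟨l, hpw, fun z => by rw [← List.mem_toFinset, hl, mem_toFinset], ?_⟩
  rw [ncard_eq_toFinset_card', ← hl, List.toFinset_card_of_nodup hpw.nodup_of_not_le]

theorem exists_isLinearExtension_idxOf [Fintype α] [DecidableEq α] {l : List α}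
    (hmem : ∀ z, z ∈ l) (hl : l.Pairwise (fun u v => ¬ v ≤ u)) :
    ∃ e : Fin (Fintype.card α) ≃ α, IsLinearExtension e ∧ ∀ z, (e.symm z : ℕ) = l.idxOf z := by
  have hnd := hl.nodup_of_not_le
  have hlen := hnd.length_eq_card hmem
  refine ⟨(finCongr hlen.symm).trans (hnd.getEquivOfForallMemList l hmem), fun i j hij => ?_,
    fun z => rfl⟩
  by_contra! hji
  rcases hji.lt_or_eq with hlt | rfl
  · exact List.pairwise_iff_getElem.1 hl j i (by omega) (by omega) hlt hij.le
  · exact lt_irrefl _ hij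

theorem exists_list_below_first_above_last [Fintype α] {x y : α} (hinc : ¬ x < y ∧ ¬ y < x) :
    ∃ L : List α, L.Pairwise (fun u v => ¬ v ≤ u) ∧ (∀ z, z ∈ L ↔ z ≠ x ∧ z ≠ y) ∧
      (∀ u ∈ L.take (L.length - (Ioi x ∪ Ioi y).ncard), ¬ x ≤ u ∧ ¬ y ≤ u) ∧
      (∀ v ∈ L.drop (Iio x ∪ Iio y).ncard, ¬ v ≤ x ∧ ¬ v ≤ y) := by
  obtain ⟨lD, hpwD, hmemD, hlenD⟩ := (Iio x ∪ Iio y).exists_list_pairwise_not_le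
  obtain ⟨lM, hpwM, hmemM, -⟩ :=
    {z | ¬ (z ≤ x ∨ z ≤ y ∨ x ≤ z ∨ y ≤ z)}.exists_list_pairwise_not_le
  obtain ⟨lU, hpwU, hmemU, hlenU⟩ := (Ioi x ∪ Ioi y).exists_list_pairwise_not_le
  simp only [mem_union, mem_Iio, mem_Ioi, mem_ofPred_eq] at hmemD hmemM hmemU
  refine ⟨lD ++ lM ++ lU, ?_, fun z => ?_, ?_, ?_⟩
  · refine List.pairwise_append.2 ⟨List.pairwise_append.2 ⟨hpwD, hpwM, ?_⟩, hpwU, ?_⟩ <;>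
      simp only [List.mem_append, hmemD, hmemM, hmemU] <;> grind
  · simp only [List.mem_append, hmemD, hmemM, hmemU]
    grind [lt_iff_le_and_ne]
  · rw [List.length_append, ← hlenU, Nat.add_sub_cancel, List.take_left]
    simp only [List.mem_append, hmemD, hmemM]
    grind
  · rw [List.append_assoc, ← hlenD, List.drop_left]
    simp only [List.mem_append, hmemM, hmemU]
    grind

theorem exists_isLinearExtension_of_insert_two [Fintype α] {x y : α} {L : List α}
    (hL : L.Pairwise (fun u v => ¬ v ≤ u)) (hmem : ∀ z, z ∈ L ↔ z ≠ x ∧ z ≠ y) (hyx : ¬ y ≤ x)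
    {i j : ℕ} (hij : i ≤ j) (hj : j ≤ L.length)
    (hpre : ∀ u ∈ L.take j, ¬ x ≤ u ∧ ¬ y ≤ u) (hsuf : ∀ v ∈ L.drop i, ¬ v ≤ x ∧ ¬ v ≤ y) :
    ∃ e : Fin (Fintype.card α) ≃ α, IsLinearExtension e ∧
      (e.symm x : ℕ) = i ∧ (e.symm y : ℕ) = j + 1 := by
  classical
  set B := L.take i
  set C := (L.take j).drop i
  set D := L.drop j
  have hBC : B ++ C = L.take j := by
    rw [← List.take_append_drop i (L.take j), List.take_take, min_eq_left hij]
  have hCD : C ++ D = L.drop i := by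
    rw [← List.drop_append_of_le_length (by simpa using ⟨hij, hij.trans hj⟩),
      List.take_append_drop]
  have hBCD : B ++ C ++ D = L := by rw [hBC, List.take_append_drop]
  have hpw := List.pairwise_append_cons_append_cons (hBCD ▸ hL) hyx (hBC ▸ hpre) (hCD ▸ hsuf)
  have hall : ∀ z, z ∈ B ++ x :: C ++ y :: D := by
    intro z
    by_cases hzx : z = x
    · simp [hzx]
    by_cases hzy : z = y
    · simp [hzy]
    have : z ∈ B ++ C ++ D := hBCD ▸ (hmem z).2 ⟨hzx, hzy⟩
    simp only [List.mem_append, List.mem_cons] at this ⊢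
    tauto
  have hxB : x ∉ B := fun h => ((hmem x).1 (List.mem_of_mem_take h)).1 rfl
  have hyBxC : y ∉ B ++ x :: C := by
    have hyBC : y ∉ B ++ C := fun h => ((hmem y).1 (List.mem_of_mem_take (hBC ▸ h))).2 rfl
    simp only [List.mem_append, List.mem_cons, not_or] at hyBC ⊢
    exact ⟨hyBC.1, fun h => hyx h.le, hyBC.2⟩
  obtain ⟨e, he, hidx⟩ := exists_isLinearExtension_idxOf hall hpw
  refine ⟨e, he, ?_, ?_⟩
  · rw [hidx, List.idxOf_append_of_mem (by simp), List.idxOf_append_of_notMem hxB,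
      List.idxOf_cons_self]
    simp only [B, List.length_take]
    omega
  · rw [hidx, List.idxOf_append_of_notMem hyBxC, List.idxOf_cons_self]
    simp only [B, C, List.length_append, List.length_cons, List.length_take, List.length_drop]
    omega

theorem exists_isLinearExtension_of_lt [Fintype α] {x y : α} (hxy : x ≠ y)
    (hinc : ¬ x < y ∧ ¬ y < x) {p q : ℕ} (hpq : p < q) (hp : (Iio x ∪ Iio y).ncard < p)
    (hq : q + (Ioi x ∪ Ioi y).ncard ≤ Fintype.card α) :
    ∃ e : Fin (Fintype.card α) ≃ α, IsLinearExtension e ∧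
      (e.symm x : ℕ) + 1 = p ∧ (e.symm y : ℕ) + 1 = q := by
  obtain ⟨L, hL, hmem, hpre, hsuf⟩ := exists_list_below_first_above_last hinc
  have hlen := List.length_add_two_eq_card hL.nodup_of_not_le hmem hxy
  obtain ⟨e, he, hx, hy⟩ := exists_isLinearExtension_of_insert_two hL hmem (by order)
    (i := p - 1) (j := q - 2) (by omega) (by omega)
    (fun u hu => hpre u (List.take_subset_take_left _ (by omega) hu))
    (fun v hv => hsuf v ((List.drop_sublist_drop_left _ (by omega)).subset hv))
  exact ⟨e, he, by omega, by omega⟩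

end LinearExtensionLists

/-- for incomparable `x ≠ y` and distinct positions `p ≠ q` in the
possible ranks `pr_P(x, y) = [a+1, n-d]`, there is a linear extension putting
`x` at position `p` and `y` at position `q` (positions are 1-indexed). -/
theorem stmt0 {α : Type*} [Fintype α] [PartialOrder α]
    (x y : α) (hxy : x ≠ y) (hinc : ¬ x < y ∧ ¬ y < x)
    (p q : ℕ) (hpq : p ≠ q)
    (hp : {z : α | z ≠ x ∧ z ≠ y ∧ (z < x ∨ z < y)}.ncard + 1 ≤ p ∧
          p ≤ Fintype.card α - {z : α | z ≠ x ∧ z ≠ y ∧ (x < z ∨ y < z)}.ncard)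
    (hq : {z : α | z ≠ x ∧ z ≠ y ∧ (z < x ∨ z < y)}.ncard + 1 ≤ q ∧
          q ≤ Fintype.card α - {z : α | z ≠ x ∧ z ≠ y ∧ (x < z ∨ y < z)}.ncard) :
    ∃ e : Fin (Fintype.card α) ≃ α, IsLinearExtension e ∧
      ((e.symm x : ℕ) + 1 = p) ∧ ((e.symm y : ℕ) + 1 = q) := by
  have hbelow : {z : α | z ≠ x ∧ z ≠ y ∧ (z < x ∨ z < y)} = Iio x ∪ Iio y := by
    ext z
    simp only [mem_ofPred_eq, mem_union, mem_Iio]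
    grind
  have habove : {z : α | z ≠ x ∧ z ≠ y ∧ (x < z ∨ y < z)} = Ioi x ∪ Ioi y := by
    ext z
    simp only [mem_ofPred_eq, mem_union, mem_Ioi]
    grind
  rw [hbelow, habove] at hp hq
  rcases hpq.lt_or_gt with hlt | hgt
  · exact exists_isLinearExtension_of_lt hxy hinc hlt (by omega) (by omega)
  · rw [union_comm (Iio x), union_comm (Ioi x)] at hp hq
    obtain ⟨e, he, hy, hx⟩ :=
      exists_isLinearExtension_of_lt hxy.symm hinc.symm hgt (by omega) (by omega)
    exact ⟨e, he, hx, hy⟩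
end

section
/- Let P be a finite poset with n elements, let x be an element of P, and let 1 ≤ p ≤ n. There exists a linear extension of P in which x occurs at position p if and only if a < p and p ≤ n − d, where a is the number of elements strictly below x in P and d is the number of elements strictly above x in P. -/
open Finset Function

section Enumeration

variable {α β : Type*} [Fintype α] [LinearOrder β]

theorem exists_equiv_fin_lt_iff_lt {f : α → β} (hf : Injective f) :
    ∃ e : Fin (Fintype.card α) ≃ α, ∀ i j, f (e i) < f (e j) ↔ i < j := by
  let g := Fintype.orderIsoFinOfCardEq (Set.range f) (Set.card_range_of_injective hf)
  refine ⟨g.toEquiv.trans (Equiv.ofInjective f hf).symm, fun i j => ?_⟩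
  simp only [Equiv.trans_apply, Equiv.apply_ofInjective_symm, Subtype.coe_lt_coe]
  exact g.lt_iff_lt

theorem val_symm_eq_card_filter_lt {f : α → β} {e : Fin (Fintype.card α) ≃ α}
    (he : ∀ i j, f (e i) < f (e j) ↔ i < j) (x : α) :
    (e.symm x : ℕ) = #{z | f z < f x} :=
  calc (e.symm x : ℕ) = #(Iio (e.symm x)) := (Fin.card_Iio _).symm
    _ = #{z | f z < f x} := card_equiv e (by simp [← he])

theorem card_filter_val_symm_lt (e : Fin (Fintype.card α) ≃ α) {m : ℕ}
    (hm : m ≤ Fintype.card α) : #{z | (e.symm z : ℕ) < m} = m :=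
  calc #{z | (e.symm z : ℕ) < m} = #{i : Fin _ | (i : ℕ) < m} := card_equiv e.symm (by simp)
    _ = m := by rw [Fin.card_filter_val_lt, min_eq_right hm]

end Enumeration

section LinearExtension

open scoped Classical

variable {α : Type*} [PartialOrder α]

noncomputable def layer (x z : α) : ℕ := if z ≤ x then 0 else if x < z then 2 else 1

theorem layer_eq_zero_iff {x z : α} : layer x z = 0 ↔ z ≤ x := by
  unfold layer
  split_ifs <;> simp_all

theorem layer_mono (x : α) : Monotone (layer x) := by
  intro v w hvw
  unfold layer
  split_ifs <;> first | omega | order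

variable [Fintype α] {e : Fin (Fintype.card α) ≃ α}

theorem isLinearExtension_iff_strictMono_symm : IsLinearExtension e ↔ StrictMono e.symm :=
  ⟨fun h a b hab => h _ _ (by simpa using hab), fun h i j hij => by simpa using h hij⟩

theorem exists_isLinearExtension_of_strictMono {β : Type*} [LinearOrder β] {f : α → β}
    (hmono : StrictMono f) (hinj : Injective f) :
    ∃ e, IsLinearExtension e ∧ ∀ x, (e.symm x : ℕ) = #{z | f z < f x} := by
  obtain ⟨e, he⟩ := exists_equiv_fin_lt_iff_lt hinj
  exact ⟨e, fun i j hij => (he i j).1 (hmono hij), val_symm_eq_card_filter_lt he⟩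

theorem IsLinearExtension.card_filter_lt_le (he : IsLinearExtension e) (x : α) :
    #{z | z < x} ≤ (e.symm x : ℕ) :=
  calc #{z | z < x} ≤ #(Iio (e.symm x)) :=
        card_le_card_of_injOn e.symm
          (fun z hz => by simpa using isLinearExtension_iff_strictMono_symm.1 he (by simpa using hz))
          e.symm.injective.injOn
    _ = e.symm x := Fin.card_Iio _

theorem IsLinearExtension.val_symm_add_card_filter_gt_lt (he : IsLinearExtension e) (x : α) :
    (e.symm x : ℕ) + #{z | x < z} < Fintype.card α := by
  have hle : #{z | x < z} ≤ #(Ioi (e.symm x)) :=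
    card_le_card_of_injOn e.symm
      (fun z hz => by simpa using isLinearExtension_iff_strictMono_symm.1 he (by simpa using hz))
      e.symm.injective.injOn
  have := (e.symm x).isLt
  rw [Fin.card_Ioi] at hle
  omega

theorem exists_isLinearExtension_layered (x : α) :
    ∃ e : Fin (Fintype.card α) ≃ α, IsLinearExtension e ∧ (e.symm x : ℕ) = #{z | z < x} ∧
      ∀ z, x < z → Fintype.card α - #{w | x < w} ≤ e.symm z := by
  let g : α → ℕ ×ₗ LinearExtension α := fun z => toLex (layer x z, toLinearExtension z)
  have hinj : Injective g := fun v w h => congrArg (fun q => (ofLex q).2) h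
  have hmono : StrictMono g := by
    intro v w hvw
    refine Prod.Lex.toLex_lt_toLex.2 ((layer_mono x hvw.le).lt_or_eq.imp_right fun h => ⟨h, ?_⟩)
    exact toLinearExtension.monotone.strictMono_of_injective (fun _ _ h => h) hvw
  obtain ⟨e, he, hpos⟩ := exists_isLinearExtension_of_strictMono hmono hinj
  refine ⟨e, he, ?_, fun z hz => ?_⟩
  · rw [hpos]
    congr 1
    ext w
    simp only [mem_filter, mem_univ, true_and]
    refine ⟨fun h => ?_, fun h => hmono h⟩
    have hne : w ≠ x := by rintro rfl; exact lt_irrefl _ h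
    have hle : w ≤ x := by
      rw [← layer_eq_zero_iff]
      rcases Prod.Lex.toLex_lt_toLex.1 h with h | ⟨h, -⟩ <;>
        simp only [layer_eq_zero_iff.2 le_rfl] at h <;> omega
    exact hle.lt_of_ne hne
  · have hlow : ∀ w, ¬ x < w → g w < g z := fun w hw =>
      Prod.Lex.toLex_lt_toLex.2 (Or.inl (by unfold layer; split_ifs <;> first | omega | order))
    calc Fintype.card α - #{w | x < w} = #{w | ¬ x < w} := by
          have := card_filter_add_card_filter_not (s := univ) (fun w => x < w)
          rw [card_univ] at this
          omega
      _ ≤ #{w | g w < g z} := card_le_card fun w => by simpa using hlow w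
      _ = e.symm z := (hpos z).symm

theorem exists_isLinearExtension_val_symm_add_one_eq {x : α} {p : ℕ}
    (hlo : #{z | z < x} < p) (hhi : p ≤ Fintype.card α - #{z | x < z}) :
    ∃ e : Fin (Fintype.card α) ≃ α, IsLinearExtension e ∧ (e.symm x : ℕ) + 1 = p := by
  obtain ⟨e₁, he₁, hx, hgt⟩ := exists_isLinearExtension_layered x
  -- Doubling the `e₁`-ranks frees the odd slot `2p - 1` for `x`, right after the `p` elements of
  -- `e₁`-rank `< p` (`x` among them); none of them lies above `x`, and all elements below `x`
  -- are among them.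
  let f : α → ℕ := fun z => if z = x then 2 * p - 1 else 2 * e₁.symm z
  have hmono : StrictMono f := by
    intro v w hvw
    have hrank : (e₁.symm v : ℕ) < e₁.symm w := isLinearExtension_iff_strictMono_symm.1 he₁ hvw
    by_cases hv : v = x
    · subst hv
      have := hgt w hvw
      simp only [f, hvw.ne', if_true, if_false]
      omega
    by_cases hw : w = x
    · subst hw
      simp only [f, hv, if_true, if_false]
      omega
    · simp only [f, hv, hw, if_false]
      omega
  have hinj : Injective f := by
    intro v w h
    by_cases hv : v = x <;> by_cases hw : w = x
    · rw [hv, hw]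
    all_goals simp only [f, hv, hw, if_true, if_false] at h
    · omega
    · omega
    · exact e₁.symm.injective (Fin.ext (by omega))
  obtain ⟨e, he, hpos⟩ := exists_isLinearExtension_of_strictMono hmono hinj
  have hbefore : ({z | f z < f x} : Finset α) = ({z | (e₁.symm z : ℕ) < p} : Finset α).erase x := by
    ext z
    by_cases hz : z = x
    · simp [f, hz]
    · simp only [f, hz, ↓reduceIte, mem_filter, mem_univ, true_and, mem_erase, ne_eq,
        not_false_eq_true]
      omega
  have hxp : x ∈ ({z | (e₁.symm z : ℕ) < p} : Finset α) := by
    simp only [mem_filter, mem_univ, true_and]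
    omega
  refine ⟨e, he, ?_⟩
  rw [hpos, hbefore, card_erase_of_mem hxp, card_filter_val_symm_lt e₁ (by omega)]
  omega

end LinearExtension

theorem stmt1_general {α : Type*} [Fintype α] [PartialOrder α]
    (x : α) (p : ℕ) :
    (∃ e : Fin (Fintype.card α) ≃ α, IsLinearExtension e ∧ (e.symm x : ℕ) + 1 = p)
    ↔ ({z : α | z < x}.ncard < p ∧
        p ≤ Fintype.card α - {z : α | x < z}.ncard) := by
  classical
  have hbelow : {z : α | z < x}.ncard = #{z | z < x} := by simp [Set.ncard_eq_toFinset_card']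
  have habove : {z : α | x < z}.ncard = #{z | x < z} := by simp [Set.ncard_eq_toFinset_card']
  rw [hbelow, habove]
  constructor
  · rintro ⟨e, he, rfl⟩
    have := he.card_filter_lt_le x
    have := he.val_symm_add_card_filter_gt_lt x
    omega
  · exact fun ⟨hlo, hhi⟩ => exists_isLinearExtension_val_symm_add_one_eq hlo hhi

/-- `x` occurs at (1-indexed) position `p` in some linear extension
iff `a < p` and `p ≤ n - d`, where `a` is the number of elements strictly below
`x` and `d` the number of elements strictly above `x`. -/
theorem stmt1 {α : Type*} [Fintype α] [PartialOrder α]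
    (x : α) (p : ℕ) (hp : 1 ≤ p ∧ p ≤ Fintype.card α) :
    (∃ e : Fin (Fintype.card α) ≃ α, IsLinearExtension e ∧ (e.symm x : ℕ) + 1 = p)
    ↔ ({z : α | z < x}.ncard < p ∧
        p ≤ Fintype.card α - {z : α | x < z}.ncard) :=
  stmt1_general x p
end

section
/- Let (P, T) be a labeled finite poset with n elements, let 1 ≤ k ≤ n, and let t be a label. Then every linear extension of P has an element labeled t at position k if and only if every element x of P satisfying a_x < k ≤ n − d_x has T(x) = t, where a_x is the number of elements strictly below x and d_x is the number of elements strictly above x. -/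
open Set Function

lemma IsLowerSet.exists_between_ncard_eq {α : Type*} [PartialOrder α] {s u : Set α}
    (hs : IsLowerSet s) (hu : IsLowerSet u) (hsu : s ⊆ u) (hfin : u.Finite) {m : ℕ}
    (hsm : s.ncard ≤ m) (hmu : m ≤ u.ncard) :
    ∃ v, IsLowerSet v ∧ s ⊆ v ∧ v ⊆ u ∧ v.ncard = m := by
  induction h : u.ncard - m generalizing u with
  | zero => exact ⟨u, hu, hsu, subset_rfl, by omega⟩
  | succ j ih =>
    have hne : (u \ s).Nonempty := by
      by_contra! hempty
      have := ncard_le_ncard (sdiff_eq_empty.1 hempty) (hfin.subset hsu)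
      omega
    obtain ⟨y, hy⟩ := hfin.sdiff.exists_maximal hne
    have hlower : IsLowerSet (u \ {y}) := by
      rintro a b hba ⟨hau, hay⟩
      refine ⟨hu hba hau, ?_⟩
      rintro rfl
      have has : a ∉ s := fun has ↦ hy.1.2 (hs hba has)
      exact hay (hy.eq_of_le ⟨hau, has⟩ hba).symm
    have hcard : (u \ {y}).ncard + 1 = u.ncard := ncard_sdiff_singleton_add_one hy.1.1 hfin
    obtain ⟨v, hv, hsv, hvu, hvm⟩ := ih hlower (subset_sdiff_singleton hsu hy.1.2) hfin.sdiff
      (by omega) (by omega)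
    exact ⟨v, hv, hsv, hvu.trans sdiff_subset, hvm⟩

lemma exists_isLinearExtension_symm_apply_eq_ncard {α β : Type*} [Fintype α] [PartialOrder α]
    [LinearOrder β] {g : α → β} (hg : StrictMono g) (hinj : Injective g) :
    ∃ e : Fin (Fintype.card α) ≃ α, IsLinearExtension e ∧
      ∀ z, (e.symm z : ℕ) = {w | g w < g z}.ncard := by
  let rank : α → ℕ := fun z ↦ {w | g w < g z}.ncard
  have rank_lt_card (z : α) : rank z < Fintype.card α := by
    rw [← Nat.card_eq_fintype_card, ← ncard_univ]
    exact ncard_lt_ncard (ssubset_univ_iff.2 fun h ↦ lt_irrefl (g z) (h.symm ▸ mem_univ z :))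
  have rank_lt_rank {z w : α} (h : g z < g w) : rank z < rank w :=
    ncard_lt_ncard ⟨fun a ha ↦ lt_trans ha h, not_subset.2 ⟨z, h, lt_irrefl _⟩⟩
  let f : α → Fin (Fintype.card α) := fun z ↦ ⟨rank z, rank_lt_card z⟩
  have hf : Injective f := by
    intro z w hzw
    by_contra hne
    rcases lt_or_gt_of_ne (hinj.ne hne) with h | h
    · exact (rank_lt_rank h).ne (congrArg Fin.val hzw)
    · exact (rank_lt_rank h).ne (congrArg Fin.val hzw).symm
  have hbij : Bijective f := (Fintype.bijective_iff_injective_and_card f).2 ⟨hf, by simp⟩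
  refine ⟨(Equiv.ofBijective f hbij).symm, fun i j hij ↦ ?_, fun z ↦ rfl⟩
  obtain ⟨z, rfl⟩ := hbij.surjective i
  obtain ⟨w, rfl⟩ := hbij.surjective j
  simp only [Equiv.ofBijective_symm_apply_apply] at hij
  exact rank_lt_rank (hg hij)

lemma exists_isLinearExtension_symm_apply_eq {α : Type*} [Fintype α] [PartialOrder α]
    {s : Set α} {x : α} (hs : IsLowerSet s) (hxs : x ∉ s) (hlt : ∀ z < x, z ∈ s) :
    ∃ e : Fin (Fintype.card α) ≃ α, IsLinearExtension e ∧ (e.symm x : ℕ) = s.ncard := by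
  classical
  -- sort by block (`s`, then `x`, then the rest), and inside a block by some linear extension
  let block : α → ℕ := fun z ↦ if z ∈ s then 0 else if z = x then 1 else 2
  have hblock : Monotone block := by
    intro z w hzw
    have hw : w ∈ s → z ∈ s := fun hw ↦ hs hzw hw
    have hwx : w = x → z ∈ s ∨ z = x :=
      fun hwx ↦ hwx ▸ hzw.lt_or_eq.imp (hlt z ∘ (hwx ▸ ·)) id
    simp only [block]
    split_ifs <;> simp_all
  let g : α → ℕ ×ₗ LinearExtension α := fun z ↦ toLex (block z, toLinearExtension z)
  have hg : StrictMono g := fun z w h ↦ Prod.Lex.toLex_strictMono <|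
    Prod.mk_lt_mk_of_le_of_lt (hblock h.le)
      (toLinearExtension.monotone.strictMono_of_injective (fun _ _ h ↦ h) h)
  have hinj : Injective g := fun z w h ↦ congrArg (fun p ↦ (ofLex p).2) h
  obtain ⟨e, he, hpos⟩ := exists_isLinearExtension_symm_apply_eq_ncard hg hinj
  refine ⟨e, he, ?_⟩
  rw [hpos]
  congr 1
  ext z
  by_cases hz : z ∈ s
  · simp [g, block, Prod.Lex.lt_iff, hz, hxs]
  · by_cases hzx : z = x
    · simp [hzx, hxs]
    · simp [g, block, Prod.Lex.lt_iff, hz, hxs, hzx]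

section IsLinearExtension

variable {α : Type*} [Fintype α] [PartialOrder α] {e : Fin (Fintype.card α) ≃ α}

lemma IsLinearExtension.ncard_setOf_lt_apply_le (he : IsLinearExtension e)
    (i : Fin (Fintype.card α)) :
    {z | z < e i}.ncard ≤ i :=
  calc {z | z < e i}.ncard
      ≤ (Iio i).ncard := ncard_le_ncard_of_injOn e.symm
        (fun z hz ↦ he _ _ (by simpa using hz)) e.symm.injective.injOn
    _ = i := by simp [ncard_eq_toFinset_card']

lemma IsLinearExtension.ncard_setOf_apply_lt_le (he : IsLinearExtension e)
    (i : Fin (Fintype.card α)) :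
    {z | e i < z}.ncard ≤ Fintype.card α - 1 - i :=
  calc {z | e i < z}.ncard
      ≤ (Ioi i).ncard := ncard_le_ncard_of_injOn e.symm
        (fun z hz ↦ he _ _ (by simpa using hz)) e.symm.injective.injOn
    _ = Fintype.card α - 1 - i := by simp [ncard_eq_toFinset_card']

end IsLinearExtension

lemma ncard_compl_Ici {α : Type*} [Fintype α] [PartialOrder α] (x : α) :
    (Ici x)ᶜ.ncard = Fintype.card α - ({z | x < z}.ncard + 1) := by
  rw [ncard_compl, Nat.card_eq_fintype_card, ← Ioi_insert, ncard_insert_of_notMem self_notMem_Ioi]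
  rfl

theorem stmt2_general {α L : Type*} [Fintype α] [PartialOrder α]
    (T : α → L) (t : L) (k : ℕ) :
    (∀ e : Fin (Fintype.card α) ≃ α, IsLinearExtension e →
        ∀ i : Fin (Fintype.card α), (i : ℕ) + 1 = k → T (e i) = t)
    ↔ (∀ x : α,
        ({z : α | z < x}.ncard < k ∧ k ≤ Fintype.card α - {z : α | x < z}.ncard) →
          T x = t) := by
  constructor
  · rintro H x ⟨hbelow, habove⟩
    obtain ⟨v, hv, hIio, hIci, hcard⟩ := (isLowerSet_Iio x).exists_between_ncard_eq
      (isUpperSet_Ici x).compl (fun z hz hxz ↦ (lt_of_lt_of_le hz hxz).false) (toFinite _)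
      (m := k - 1) (by simp only [Iio]; omega) (by rw [ncard_compl_Ici]; omega)
    obtain ⟨e, he, hex⟩ :=
      exists_isLinearExtension_symm_apply_eq hv (fun hxv ↦ hIci hxv le_rfl) hIio
    simpa using H e he (e.symm x) (by omega)
  · intro H e he i hi
    have := he.ncard_setOf_lt_apply_le i
    have := he.ncard_setOf_apply_lt_le i
    exact H (e i) (by omega)

/-- every linear extension of the labeled finite poset `(α, T)` has
an element labeled `t` at position `k` (1-indexed) iff every element `x` with
`a_x < k ≤ n - d_x` has label `t`, where `a_x` counts elements strictly below
`x` and `d_x` counts elements strictly above `x`. -/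
theorem stmt2 {α L : Type*} [Fintype α] [PartialOrder α]
    (T : α → L) (t : L) (k : ℕ) (hk : 1 ≤ k ∧ k ≤ Fintype.card α) :
    (∀ e : Fin (Fintype.card α) ≃ α, IsLinearExtension e →
        ∀ i : Fin (Fintype.card α), (i : ℕ) + 1 = k → T (e i) = t)
    ↔ (∀ x : α,
        ({z : α | z < x}.ncard < k ∧ k ≤ Fintype.card α - {z : α | x < z}.ncard) →
          T x = t) :=
  stmt2_general T t k
end

section
/- Let (M, ⊕, ε) be a cancellative monoid, let (P, T) be a labeled finite poset, and let h be an accumulation map into M. Then all linear extensions of P have the same accumulation result if and only if (P, T) has safe swaps with respect to h and ⊕. -/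
/-- The accumulation result of a linear extension `e` of a labeled finite poset
`(α, T)` with accumulation map `h` into a monoid: the ordered product
`h (T x₁) 1 * h (T x₂) 2 * ⋯ * h (T xₙ) n` (positions are 1-indexed). -/
def accumResult {α L M : Type*} [Fintype α] [PartialOrder α] [Monoid M]
    (T : α → L) (h : L → ℕ → M) (e : Fin (Fintype.card α) ≃ α) : M :=
  (List.ofFn fun i : Fin (Fintype.card α) => h (T (e i)) ((i : ℕ) + 1)).prod

/-- `(α, T)` has safe swaps with respect to `h` and the monoid operation: for
all distinct incomparable `x, y` and all consecutive positions `p, p+1` in the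
possible ranks `pr(x, y) = [a+1, n-d]`, swapping `x` and `y` at positions `p`
and `p+1` does not change the local accumulation result. -/
def HasSafeSwaps {α L M : Type*} [Fintype α] [PartialOrder α] [Monoid M]
    (T : α → L) (h : L → ℕ → M) : Prop :=
  ∀ x y : α, x ≠ y → ¬ x < y → ¬ y < x →
    ∀ p : ℕ,
      {z : α | z ≠ x ∧ z ≠ y ∧ (z < x ∨ z < y)}.ncard + 1 ≤ p →
      p + 1 ≤ Fintype.card α - {z : α | z ≠ x ∧ z ≠ y ∧ (x < z ∨ y < z)}.ncard →
      h (T x) p * h (T y) (p + 1) = h (T y) p * h (T x) (p + 1)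

section Accumulation

variable {α L M : Type*} [Monoid M] (T : α → L) (h : L → ℕ → M)

def accumFrom : ℕ → List α → M
  | _, [] => 1
  | k, a :: l => h (T a) k * accumFrom (k + 1) l

@[simp] lemma accumFrom_nil (k : ℕ) : accumFrom T h k [] = 1 := rfl

@[simp] lemma accumFrom_cons (k : ℕ) (a : α) (l : List α) :
    accumFrom T h k (a :: l) = h (T a) k * accumFrom T h (k + 1) l := rfl

lemma accumFrom_append (k : ℕ) (l₁ l₂ : List α) :
    accumFrom T h k (l₁ ++ l₂) =
      accumFrom T h k l₁ * accumFrom T h (k + l₁.length) l₂ := by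
  induction l₁ generalizing k with
  | nil => simp
  | cons a l ih => simp [ih, mul_assoc, Nat.add_assoc, Nat.add_comm 1]

lemma accumFrom_append_cons_cons (k : ℕ) (pre post : List α) (a b : α) :
    accumFrom T h k (pre ++ a :: b :: post) =
      accumFrom T h k pre * (h (T a) (k + pre.length) * h (T b) (k + pre.length + 1)) *
        accumFrom T h (k + pre.length + 2) post := by
  simp [accumFrom_append, mul_assoc]

lemma accumFrom_ofFn {n : ℕ} (k : ℕ) (f : Fin n → α) :
    accumFrom T h k (List.ofFn f) = (List.ofFn fun i => h (T (f i)) (k + i)).prod := by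
  induction n generalizing k with
  | zero => simp
  | succ n ih => simp [List.ofFn_succ, ih, Nat.add_right_comm _ 1, Nat.add_assoc]

end Accumulation

lemma List.Nodup.ncard_setOf_mem {α : Type*} {l : List α} (hl : l.Nodup) :
    {a | a ∈ l}.ncard = l.length := by
  classical
  rw [← List.toFinset_card_of_nodup hl, ← Set.ncard_coe_finset]
  congr 1
  ext
  simp

section LinearExtensionList

variable {α : Type*} [PartialOrder α]

structure IsLinearExtensionList (l : List α) : Prop where
  nodup : l.Nodup
  mem : ∀ a, a ∈ l
  pairwise : l.Pairwise fun a b => ¬ b < a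

namespace IsLinearExtensionList

variable {l pre post : List α} {x y : α}

lemma length_eq [Fintype α] (hl : IsLinearExtensionList l) : l.length = Fintype.card α := by
  rw [← hl.nodup.ncard_setOf_mem, ← Nat.card_eq_fintype_card, ← Set.ncard_univ]
  congr 1
  ext a
  simp [hl.mem a]

lemma swap (hl : IsLinearExtensionList (pre ++ x :: y :: post)) (hxy : ¬ x < y) :
    IsLinearExtensionList (pre ++ y :: x :: post) := by
  have hperm : (pre ++ x :: y :: post).Perm (pre ++ y :: x :: post) :=
    (List.Perm.swap y x post).append_left pre
  refine ⟨hperm.nodup_iff.mp hl.nodup, fun a => hperm.mem_iff.mp (hl.mem a), ?_⟩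
  have := hl.pairwise
  simp only [List.pairwise_append, List.pairwise_cons, List.mem_cons] at this ⊢
  grind

end IsLinearExtensionList

def IsSwapInvariant {β : Type*} (f : List α → β) : Prop :=
  ∀ (pre post : List α) (x y : α), IsLinearExtensionList (pre ++ x :: y :: post) →
    ¬ x < y → f (pre ++ x :: y :: post) = f (pre ++ y :: x :: post)

namespace IsSwapInvariant

variable {β : Type*} {f : List α → β}

lemma eq_of_move_front (hf : IsSwapInvariant f) {s v : List α} {b : α} (u : List α)
    (hl : IsLinearExtensionList (s ++ u ++ b :: v)) (hb : ∀ w ∈ u, ¬ w < b) :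
    IsLinearExtensionList (s ++ b :: (u ++ v)) ∧
      f (s ++ u ++ b :: v) = f (s ++ b :: (u ++ v)) := by
  induction u using List.reverseRecOn generalizing v with
  | nil => simpa using hl
  | append_singleton u z ih =>
    have hzb : ¬ z < b := hb z (by simp)
    rw [show s ++ (u ++ [z]) ++ b :: v = s ++ u ++ z :: b :: v by simp] at hl ⊢
    obtain ⟨hl', heq⟩ := ih (hl.swap hzb) fun w hw => hb w (by simp [hw])
    rw [show u ++ [z] ++ v = u ++ z :: v by simp]
    exact ⟨hl', (hf _ _ _ _ hl hzb).trans heq⟩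

lemma apply_append_eq (hf : IsSwapInvariant f) :
    ∀ (l₂ s l₁ : List α), IsLinearExtensionList (s ++ l₁) →
      IsLinearExtensionList (s ++ l₂) → f (s ++ l₁) = f (s ++ l₂)
  | [], s, l₁, h₁, h₂ => by
    obtain rfl : l₁ = [] := List.eq_nil_iff_forall_not_mem.2 fun a ha =>
      List.disjoint_of_nodup_append h₁.nodup (by simpa using h₂.mem a) ha
    rfl
  | b :: t, s, l₁, h₁, h₂ => by
    have hb : b ∈ l₁ := by
      have hbs : b ∉ s := fun hbs => List.disjoint_of_nodup_append h₂.nodup hbs (by simp)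
      simpa [hbs] using h₁.mem b
    obtain ⟨u, v, rfl⟩ := List.append_of_mem hb
    have hu : ∀ w ∈ u, ¬ w < b := by
      intro w hw hwb
      have hpw := (List.pairwise_append.1 h₂.pairwise).2.1
      rcases (by simpa using h₂.mem w : w ∈ s ∨ w = b ∨ w ∈ t) with hws | rfl | hwt
      · exact List.disjoint_of_nodup_append h₁.nodup hws (by simp [hw])
      · exact lt_irrefl _ hwb
      · exact List.rel_of_pairwise_cons hpw hwt hwb
    rw [← List.append_assoc] at h₁ ⊢
    obtain ⟨h₁', heq⟩ := hf.eq_of_move_front u h₁ hu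
    rw [heq]
    simpa using
      hf.apply_append_eq t (s ++ [b]) (u ++ v) (by simpa using h₁') (by simpa using h₂)

theorem apply_eq (hf : IsSwapInvariant f) {l₁ l₂ : List α} (h₁ : IsLinearExtensionList l₁)
    (h₂ : IsLinearExtensionList l₂) : f l₁ = f l₂ :=
  hf.apply_append_eq l₂ [] l₁ h₁ h₂

end IsSwapInvariant

end LinearExtensionList

section Enumerations

variable {α : Type*} [Fintype α] [PartialOrder α]

lemma isLinearExtension_iff_pairwise (e : Fin (Fintype.card α) ≃ α) :
    IsLinearExtension e ↔ (List.ofFn e).Pairwise fun a b => ¬ b < a := by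
  rw [List.pairwise_ofFn]
  refine ⟨fun he i j hij hji => (he j i hji).not_gt hij, fun he i j hlt => ?_⟩
  rcases lt_trichotomy i j with hij | rfl | hji
  · exact hij
  · exact absurd hlt (lt_irrefl _)
  · exact absurd hlt (he hji)

lemma IsLinearExtensionList.ofFn {e : Fin (Fintype.card α) ≃ α} (he : IsLinearExtension e) :
    IsLinearExtensionList (List.ofFn e) :=
  ⟨List.nodup_ofFn.2 e.injective, fun a => List.mem_ofFn.2 ⟨e.symm a, by simp⟩,
    (isLinearExtension_iff_pairwise e).1 he⟩

lemma IsLinearExtensionList.exists_equiv {l : List α} (hl : IsLinearExtensionList l) :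
    ∃ e : Fin (Fintype.card α) ≃ α, IsLinearExtension e ∧ List.ofFn e = l := by
  classical
  let e := (finCongr hl.length_eq.symm).trans (hl.nodup.getEquivOfForallMemList l hl.mem)
  have hofFn : List.ofFn e = l := List.ext_get (by simp [hl.length_eq]) fun n _ _ => by simp [e]
  exact ⟨e, (isLinearExtension_iff_pairwise e).2 (hofFn ▸ hl.pairwise), hofFn⟩

lemma exists_isLinearExtensionList : ∃ l : List α, IsLinearExtensionList l := by
  classical
  obtain ⟨r, _, hle⟩ := extend_partialOrder ((· ≤ ·) : α → α → Prop)
  refine ⟨Finset.univ.sort r, ⟨Finset.sort_nodup _ _, fun a => by simp, ?_⟩⟩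
  refine (Finset.pairwise_sort _ r).imp fun {a b} hab hba => hba.ne ?_
  exact antisymm (hle _ _ hba.le) hab

lemma accumResult_eq_accumFrom {L M : Type*} [Monoid M] (T : α → L) (h : L → ℕ → M)
    (e : Fin (Fintype.card α) ≃ α) : accumResult T h e = accumFrom T h 1 (List.ofFn e) := by
  simp [accumResult, accumFrom_ofFn, Nat.add_comm 1]

end Enumerations

section PossibleRanks

variable {α : Type*} [PartialOrder α]

/-- `(belowPair x y).ncard` and `(abovePair x y).ncard` are the numbers `a` and `d` of the
possible ranks `pr(x, y) = [a + 1, n - d]`. -/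
def belowPair (x y : α) : Set α := {z | z ≠ x ∧ z ≠ y ∧ (z < x ∨ z < y)}

def abovePair (x y : α) : Set α := {z | z ≠ x ∧ z ≠ y ∧ (x < z ∨ y < z)}

namespace IsLinearExtensionList

variable {pre post : List α} {x y : α}

lemma ncard_belowPair_le (hl : IsLinearExtensionList (pre ++ x :: y :: post)) :
    (belowPair x y).ncard ≤ pre.length := by
  rw [← (hl.nodup.sublist (List.sublist_append_left _ _)).ncard_setOf_mem]
  refine Set.ncard_le_ncard (fun z ⟨hzx, hzy, hz⟩ => ?_) (List.finite_toSet pre)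
  have hmem := hl.mem z
  have hpw := hl.pairwise
  simp only [List.pairwise_append, List.pairwise_cons, List.mem_cons, List.mem_append] at hmem hpw
  grind

lemma ncard_abovePair_le (hl : IsLinearExtensionList (pre ++ x :: y :: post)) :
    (abovePair x y).ncard ≤ post.length := by
  rw [← (hl.nodup.sublist (List.sublist_append_right _ _)).of_cons.of_cons.ncard_setOf_mem]
  refine Set.ncard_le_ncard (fun z ⟨hzx, hzy, hz⟩ => ?_) (List.finite_toSet post)
  have hmem := hl.mem z
  have hpw := hl.pairwise
  simp only [List.pairwise_append, List.pairwise_cons, List.mem_cons, List.mem_append] at hmem hpw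
  grind

end IsLinearExtensionList

lemma HasSafeSwaps.isSwapInvariant [Fintype α] {L M : Type*} [Monoid M] {T : α → L}
    {h : L → ℕ → M} (hs : HasSafeSwaps T h) : IsSwapInvariant (accumFrom T h 1) := by
  intro pre post x y hl hxy
  have hne : x ≠ y := fun heq =>
    (List.nodup_cons.1 (hl.nodup.sublist (List.sublist_append_right _ _))).1 (by simp [heq])
  have hyx : ¬ y < x := by
    have := hl.pairwise
    simp only [List.pairwise_append, List.pairwise_cons, List.mem_cons] at this
    exact this.2.1.1 y (.inl rfl)
  have hbelow := hl.ncard_belowPair_le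
  have habove := hl.ncard_abovePair_le
  have hlen := hl.length_eq
  simp only [List.length_append, List.length_cons] at hlen
  rw [accumFrom_append_cons_cons, accumFrom_append_cons_cons,
    hs x y hne hxy hyx _ (show (belowPair x y).ncard + 1 ≤ _ by omega)
      (show _ ≤ Fintype.card α - (abovePair x y).ncard by omega)]

end PossibleRanks

section Construction

variable {α : Type*} [PartialOrder α]

theorem exists_isLowerSet_ncard_eq [Finite α] {s t : Set α} (hs : IsLowerSet s)
    (ht : IsLowerSet t) (hst : s ⊆ t) {m : ℕ} (hsm : s.ncard ≤ m) (hmt : m ≤ t.ncard) :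
    ∃ u, IsLowerSet u ∧ s ⊆ u ∧ u ⊆ t ∧ u.ncard = m := by
  obtain ⟨k, rfl⟩ := Nat.exists_eq_add_of_le hsm
  induction k generalizing s with
  | zero => exact ⟨s, hs, subset_rfl, hst, rfl⟩
  | succ k ih =>
    have hne : (t \ s).Nonempty := by
      by_contra! hempty
      have := Set.ncard_le_ncard (Set.sdiff_eq_empty.1 hempty)
      omega
    obtain ⟨z, hz⟩ := (t \ s).toFinite.exists_minimal hne
    have hins : IsLowerSet (insert z s) := by
      rintro a b hba (rfl | ha)
      · by_cases hbs : b ∈ s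
        · exact .inr hbs
        · exact .inl (hz.eq_of_le ⟨ht hba hz.prop.1, hbs⟩ hba)
      · exact .inr (hs hba ha)
    have hcard : (insert z s).ncard = s.ncard + 1 := Set.ncard_insert_of_notMem hz.prop.2
    obtain ⟨u, hu, hsu, hut, hun⟩ :=
      ih hins (Set.insert_subset hz.prop.1 hst) (by omega) (by omega)
    exact ⟨u, hu, (Set.subset_insert z s).trans hsu, hut, by omega⟩

variable {x y : α}

lemma isLowerSet_belowPair (hxy : ¬ x < y) (hyx : ¬ y < x) : IsLowerSet (belowPair x y) := by
  rintro a b hba ⟨hax, hay, ha⟩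
  refine ⟨?_, ?_, ha.imp hba.trans_lt hba.trans_lt⟩ <;> rintro rfl <;>
    rcases ha with ha | ha <;> order

lemma exists_isLinearExtensionList_of_isLowerSet [Fintype α] {I : Set α} (hI : IsLowerSet I)
    (hxI : x ∉ I) (hyI : y ∉ I) (hne : x ≠ y) (hyx : ¬ y < x)
    (hbelow : belowPair x y ⊆ I) :
    ∃ pre post, pre.length = I.ncard ∧ IsLinearExtensionList (pre ++ x :: y :: post) := by
  classical
  obtain ⟨l, hl⟩ := exists_isLinearExtensionList (α := α)
  have hpre : (l.filter (· ∈ I)).Nodup := hl.nodup.filter _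
  have hlower : ∀ a ∈ I, ∀ b ∉ I, ¬ b < a := fun a ha b hb hba => hb (hI hba.le ha)
  have hrest : ∀ b ∉ I, b ≠ x → b ≠ y → ¬ b < x ∧ ¬ b < y := fun b hb hbx hby =>
    not_or.1 fun hlt => hb (hbelow ⟨hbx, hby, hlt⟩)
  refine ⟨l.filter (· ∈ I), l.filter fun z => z ∉ I ∧ z ≠ x ∧ z ≠ y, ?_, ?_, ?_, ?_⟩
  · rw [← hpre.ncard_setOf_mem]
    congr 1
    ext
    simp [hl.mem]
  · have hpost := hl.nodup.filter fun z => decide (z ∉ I ∧ z ≠ x ∧ z ≠ y)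
    simp only [List.nodup_append, List.nodup_cons, List.mem_filter, List.mem_cons] at hpre hpost ⊢
    grind
  · intro z
    simp only [List.mem_append, List.mem_filter, List.mem_cons, hl.mem]
    grind
  · have h₁ := hl.pairwise.filter fun z => decide (z ∈ I)
    have h₂ := hl.pairwise.filter fun z => decide (z ∉ I ∧ z ≠ x ∧ z ≠ y)
    simp only [List.pairwise_append, List.pairwise_cons, List.mem_filter, List.mem_cons]
    grind

end Construction

lemma exists_isLinearExtensionList_adjacent {α : Type*} [Fintype α] [PartialOrder α] {x y : α}
    {p : ℕ} (hne : x ≠ y) (hxy : ¬ x < y) (hyx : ¬ y < x)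
    (hp : (belowPair x y).ncard + 1 ≤ p)
    (hp' : p + 1 ≤ Fintype.card α - (abovePair x y).ncard) :
    ∃ pre post, 1 + pre.length = p ∧ IsLinearExtensionList (pre ++ x :: y :: post) := by
  -- the largest lower set avoiding `x` and `y`; it has `n - 2 - d` elements
  set t : Set α := {z | ¬ x ≤ z ∧ ¬ y ≤ z}
  have ht : IsLowerSet t := fun a b hba ha =>
    ⟨fun h => ha.1 (h.trans hba), fun h => ha.2 (h.trans hba)⟩
  have hbt : belowPair x y ⊆ t := by
    rintro z ⟨hzx, hzy, hz⟩
    constructor <;> intro h <;> rcases hz with hz | hz <;> order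
  have hcompl : tᶜ = insert x (insert y (abovePair x y)) := by
    ext z
    simp only [t, abovePair, Set.mem_compl_iff, Set.mem_insert_iff, Set.mem_ofPred_eq]
    grind [le_iff_lt_or_eq]
  have hcard : t.ncard + ((abovePair x y).ncard + 1 + 1) = Fintype.card α := by
    have hx : x ∉ insert y (abovePair x y) := by simp [abovePair, hne]
    have hy : y ∉ abovePair x y := by simp [abovePair]
    rw [← Set.ncard_insert_of_notMem hy, ← Set.ncard_insert_of_notMem hx, ← hcompl,
      Set.ncard_add_ncard_compl, Nat.card_eq_fintype_card]
  obtain ⟨I, hI, hbI, hIt, hIcard⟩ := exists_isLowerSet_ncard_eq (isLowerSet_belowPair hxy hyx)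
    ht hbt (m := p - 1) (by omega) (by omega)
  obtain ⟨pre, post, hlen, hl⟩ := exists_isLinearExtensionList_of_isLowerSet hI
    (fun hx => (hIt hx).1 le_rfl) (fun hy => (hIt hy).2 le_rfl) hne hyx hbI
  exact ⟨pre, post, by omega, hl⟩

/-- over a cancellative monoid, all linear extensions of a labeled
finite poset have the same accumulation result iff the poset has safe swaps. -/
theorem stmt4 {α L M : Type*} [Fintype α] [PartialOrder α] [CancelMonoid M]
    (T : α → L) (h : L → ℕ → M) :
    (∀ e₁ e₂ : Fin (Fintype.card α) ≃ α,
        IsLinearExtension e₁ → IsLinearExtension e₂ →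
        accumResult T h e₁ = accumResult T h e₂)
    ↔ HasSafeSwaps T h := by
  refine ⟨fun hconst x y hne hxy hyx p hp hp' => ?_, fun hs e₁ e₂ he₁ he₂ => ?_⟩
  · obtain ⟨pre, post, rfl, hl⟩ := exists_isLinearExtensionList_adjacent hne hxy hyx hp hp'
    obtain ⟨e₁, he₁, hl₁⟩ := hl.exists_equiv
    obtain ⟨e₂, he₂, hl₂⟩ := (hl.swap hxy).exists_equiv
    have key := hconst e₁ e₂ he₁ he₂
    rw [accumResult_eq_accumFrom, accumResult_eq_accumFrom, hl₁, hl₂,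
      accumFrom_append_cons_cons, accumFrom_append_cons_cons] at key
    exact mul_left_cancel (mul_right_cancel key)
  · rw [accumResult_eq_accumFrom, accumResult_eq_accumFrom]
    exact hs.isSwapInvariant.apply_eq (.ofFn he₁) (.ofFn he₂)
end

section
/- For any poset (ID, <) and indistinguishable antichains A_1, A_2 ⊆ ID with A_1 ∩ A_2 ≠ ∅, the union A_1 ∪ A_2 is an indistinguishable antichain of (ID, <). -/
/-- A subset `A` of a poset is an indistinguishable antichain if it is an
antichain (no two of its elements are comparable) and all of its elements
compare in the same way to any element outside of `A`. -/
def IsIndisAntichain {γ : Type*} [Preorder γ] (A : Set γ) : Prop :=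
  IsAntichain (· < ·) A ∧
    ∀ x ∈ A, ∀ y ∈ A, ∀ z ∉ A, (x < z ↔ y < z) ∧ (z < x ↔ z < y)

/-! A common element `w` of `A` and `B` serves as a reference point: every element of `A ∪ B`
compares with anything outside `A ∪ B` exactly as `w` does, and a relation `x < y` with `x ∈ A`,
`y ∈ B \ A` would transfer to `w < y` inside the antichain `B`. -/

namespace IsIndisAntichain

variable {γ : Type*} [Preorder γ] {A B : Set γ} {w x y : γ}

theorem not_lt_of_mem_inter (hA : IsIndisAntichain A) (hB : IsIndisAntichain B)
    (hw : w ∈ A ∩ B) (hx : x ∈ A) (hy : y ∈ B) : ¬ x < y := by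
  intro hxy
  by_cases hyA : y ∈ A
  · exact hA.1 hx hyA hxy.ne hxy
  · have hwy : w < y := ((hA.2 x hx w hw.1 y hyA).1).mp hxy
    exact hB.1 hw.2 hy hwy.ne hwy

theorem isAntichain_union (hA : IsIndisAntichain A) (hB : IsIndisAntichain B)
    (hw : w ∈ A ∩ B) : IsAntichain (· < ·) (A ∪ B) :=
  _root_.isAntichain_union.mpr ⟨hA.1, hB.1, fun _ hx _ hy _ =>
    ⟨hA.not_lt_of_mem_inter hB hw hx hy,
      hB.not_lt_of_mem_inter hA ⟨hw.2, hw.1⟩ hy hx⟩⟩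

theorem compare_iff_of_mem_inter (hA : IsIndisAntichain A) (hB : IsIndisAntichain B)
    (hw : w ∈ A ∩ B) (hx : x ∈ A ∪ B) {z : γ} (hz : z ∉ A ∪ B) :
    (x < z ↔ w < z) ∧ (z < x ↔ z < w) := by
  rcases hx with hxA | hxB
  · exact hA.2 x hxA w hw.1 z fun h => hz (.inl h)
  · exact hB.2 x hxB w hw.2 z fun h => hz (.inr h)

end IsIndisAntichain

/-- the union of two intersecting indistinguishable antichains is
an indistinguishable antichain. -/
theorem stmt9 {γ : Type*} [PartialOrder γ] (A₁ A₂ : Set γ)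
    (h₁ : IsIndisAntichain A₁) (h₂ : IsIndisAntichain A₂)
    (hint : (A₁ ∩ A₂).Nonempty) :
    IsIndisAntichain (A₁ ∪ A₂) := by
  obtain ⟨w, hw⟩ := hint
  refine ⟨h₁.isAntichain_union h₂ hw, fun x hx y hy z hz => ?_⟩
  obtain ⟨hxz, hzx⟩ := h₁.compare_iff_of_mem_inter h₂ hw hx hz
  obtain ⟨hyz, hzy⟩ := h₁.compare_iff_of_mem_inter h₂ hw hy hz
  exact ⟨hxz.trans hyz.symm, hzx.trans hzy.symm⟩
end

section
/- Let P be a finite poset and let A be an ia-partition of P such that for no two distinct classes A_1 ≠ A_2 of A the union A_1 ∪ A_2 is an indistinguishable antichain of P. Then A has minimum cardinality among all ia-partitions of P, i.e., the cardinality of A equals the ia-width of P. -/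
/-- An ia-partition of a poset: a partition of all its elements into (nonempty)
indistinguishable antichains. -/
def IsIAPartition {γ : Type*} [Preorder γ] (𝒜 : Finset (Set γ)) : Prop :=
  (∀ A ∈ 𝒜, A.Nonempty ∧ IsIndisAntichain A) ∧
  (∀ A ∈ 𝒜, ∀ B ∈ 𝒜, A ≠ B → Disjoint A B) ∧
  (⋃ A ∈ 𝒜, A) = Set.univ

/-- The ia-width of a poset: the minimum cardinality of an ia-partition. -/
noncomputable def iaWidth (γ : Type*) [Preorder γ] : ℕ :=
  sInf {n : ℕ | ∃ 𝒜 : Finset (Set γ), IsIAPartition 𝒜 ∧ 𝒜.card = n}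

section Indistinguishable

variable {γ : Type*} [Preorder γ]

def Indistinguishable (x y : γ) : Prop :=
  ¬ x < y ∧ ¬ y < x ∧ ∀ z, z ≠ x → z ≠ y → ((x < z ↔ y < z) ∧ (z < x ↔ z < y))

namespace Indistinguishable

theorem refl (x : γ) : Indistinguishable x x :=
  ⟨lt_irrefl x, lt_irrefl x, fun _ _ _ => ⟨Iff.rfl, Iff.rfl⟩⟩

theorem symm {x y : γ} (h : Indistinguishable x y) : Indistinguishable y x :=
  ⟨h.2.1, h.1, fun z hzy hzx => ⟨(h.2.2 z hzx hzy).1.symm, (h.2.2 z hzx hzy).2.symm⟩⟩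

theorem trans {x y z : γ} (hxy : Indistinguishable x y) (hyz : Indistinguishable y z) :
    Indistinguishable x z := by
  by_cases hx : x = y
  · exact hx ▸ hyz
  by_cases hz : y = z
  · exact hz ▸ hxy
  by_cases hxz : x = z
  · exact hxz ▸ refl x
  have hzy := (hxy.2.2 z (Ne.symm hxz) (Ne.symm hz))
  refine ⟨fun h => hyz.1 (hzy.1.mp h), fun h => hyz.2.1 (hzy.2.mp h), fun w hwx hwz => ?_⟩
  by_cases hwy : w = y
  · subst hwy
    exact ⟨iff_of_false hxy.1 hyz.2.1, iff_of_false hxy.2.1 hyz.1⟩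
  · exact ⟨(hxy.2.2 w hwx hwy).1.trans (hyz.2.2 w hwy hwz).1,
      (hxy.2.2 w hwx hwy).2.trans (hyz.2.2 w hwy hwz).2⟩

end Indistinguishable

theorem isIndisAntichain_iff {A : Set γ} :
    IsIndisAntichain A ↔ ∀ x ∈ A, ∀ y ∈ A, Indistinguishable x y := by
  constructor
  · intro hA x hx y hy
    obtain rfl | hxy := eq_or_ne x y
    · exact Indistinguishable.refl x
    refine ⟨hA.1 hx hy hxy, hA.1 hy hx hxy.symm, fun z hzx hzy => ?_⟩
    by_cases hz : z ∈ A
    · exact ⟨iff_of_false (hA.1 hx hz hzx.symm) (hA.1 hy hz hzy.symm),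
        iff_of_false (hA.1 hz hx hzx) (hA.1 hz hy hzy)⟩
    · exact hA.2 x hx y hy z hz
  · intro h
    refine ⟨fun x hx y hy _ => (h x hx y hy).1, fun x hx y hy z hz => ?_⟩
    exact (h x hx y hy).2.2 z (fun e => hz (e ▸ hx)) (fun e => hz (e ▸ hy))

theorem IsIndisAntichain.union_of_inter_nonempty {A₁ A₂ B : Set γ}
    (h₁ : IsIndisAntichain A₁) (h₂ : IsIndisAntichain A₂) (hB : IsIndisAntichain B)
    (hA₁B : (A₁ ∩ B).Nonempty) (hA₂B : (A₂ ∩ B).Nonempty) :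
    IsIndisAntichain (A₁ ∪ A₂) := by
  rw [isIndisAntichain_iff] at *
  obtain ⟨b₁, hb₁A, hb₁B⟩ := hA₁B
  obtain ⟨b₂, hb₂A, hb₂B⟩ := hA₂B
  have to_b₂ : ∀ w ∈ A₁ ∪ A₂, Indistinguishable w b₂ := by
    rintro w (hw | hw)
    · exact (h₁ w hw b₁ hb₁A).trans (hB b₁ hb₁B b₂ hb₂B)
    · exact h₂ w hw b₂ hb₂A
  exact fun x hx y hy => (to_b₂ x hx).trans (to_b₂ y hy).symm

end Indistinguishable

section IAPartition

variable {γ : Type*} [Preorder γ] {𝒜 ℬ : Finset (Set γ)}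

theorem IsIAPartition.exists_mem (hℬ : IsIAPartition ℬ) (x : γ) : ∃ B ∈ ℬ, x ∈ B := by
  have hx : x ∈ ⋃ B ∈ ℬ, B := hℬ.2.2 ▸ Set.mem_univ x
  simpa using hx

theorem IsIAPartition.card_le_of_forall_not_isIndisAntichain_union (h𝒜 : IsIAPartition 𝒜)
    (hmax : ∀ A₁ ∈ 𝒜, ∀ A₂ ∈ 𝒜, A₁ ≠ A₂ → ¬ IsIndisAntichain (A₁ ∪ A₂))
    (hℬ : IsIAPartition ℬ) : 𝒜.card ≤ ℬ.card := by
  refine Finset.card_le_card_of_forall_subsingleton (fun A B => (A ∩ B).Nonempty) ?_ ?_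
  · intro A hA
    obtain ⟨a, ha⟩ := (h𝒜.1 A hA).1
    obtain ⟨B, hB, haB⟩ := hℬ.exists_mem a
    exact ⟨B, hB, a, ha, haB⟩
  · rintro B hB A₁ ⟨hA₁, hA₁B⟩ A₂ ⟨hA₂, hA₂B⟩
    by_contra hne
    exact hmax A₁ hA₁ A₂ hA₂ hne <| (h𝒜.1 A₁ hA₁).2.union_of_inter_nonempty
      (h𝒜.1 A₂ hA₂).2 (hℬ.1 B hB).2 hA₁B hA₂B

theorem iaWidth_eq_card (h𝒜 : IsIAPartition 𝒜)
    (hmin : ∀ ℬ : Finset (Set γ), IsIAPartition ℬ → 𝒜.card ≤ ℬ.card) :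
    iaWidth γ = 𝒜.card :=
  le_antisymm (Nat.sInf_le ⟨𝒜, h𝒜, rfl⟩)
    (le_csInf ⟨𝒜.card, 𝒜, h𝒜, rfl⟩ fun _ ⟨ℬ, hℬ, hn⟩ => hn ▸ hmin ℬ hℬ)

end IAPartition

theorem stmt10_general {γ : Type*} [PartialOrder γ]
    (𝒜 : Finset (Set γ)) (h𝒜 : IsIAPartition 𝒜)
    (hmax : ∀ A₁ ∈ 𝒜, ∀ A₂ ∈ 𝒜, A₁ ≠ A₂ → ¬ IsIndisAntichain (A₁ ∪ A₂)) :
    (∀ ℬ : Finset (Set γ), IsIAPartition ℬ → 𝒜.card ≤ ℬ.card) ∧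
    𝒜.card = iaWidth γ := by
  have hmin : ∀ ℬ : Finset (Set γ), IsIAPartition ℬ → 𝒜.card ≤ ℬ.card :=
    fun _ => h𝒜.card_le_of_forall_not_isIndisAntichain_union hmax
  exact ⟨hmin, (iaWidth_eq_card h𝒜 hmin).symm⟩

/-- if `𝒜` is an ia-partition of a finite poset such that no
union of two distinct classes of `𝒜` is an indistinguishable antichain, then
`𝒜` has minimum cardinality among all ia-partitions, i.e., its cardinality is
the ia-width. -/
theorem stmt10 {γ : Type*} [Fintype γ] [PartialOrder γ]
    (𝒜 : Finset (Set γ)) (h𝒜 : IsIAPartition 𝒜)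
    (hmax : ∀ A₁ ∈ 𝒜, ∀ A₂ ∈ 𝒜, A₁ ≠ A₂ → ¬ IsIndisAntichain (A₁ ∪ A₂)) :
    (∀ ℬ : Finset (Set γ), IsIAPartition ℬ → 𝒜.card ≤ ℬ.card) ∧
    𝒜.card = iaWidth γ :=
  stmt10_general 𝒜 h𝒜 hmax
end

section
/- Let (P, T) be a labeled finite poset whose value-equality quotient digraph G is acyclic, and let <' be the strict partial order on the labels in the image of T given by the transitive closure of the edge relation of G. Then a sequence v_1, …, v_m enumerating exactly once each distinct label in the image of T arises as the sequence of labels read along some contiguous linear extension of (P, T) (collapsing each maximal block of equal consecutive labels to a single occurrence) if and only if v_i <' v_j implies i < j, i.e., iff the sequence is a linear extension of <'. -/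
/-- A linear extension of the labeled finite poset `(α, T)` is contiguous if,
for every label, the positions carrying that label form an interval. -/
def IsContiguous {α L : Type*} [Fintype α] [PartialOrder α]
    (T : α → L) (e : Fin (Fintype.card α) ≃ α) : Prop :=
  ∀ i j k : Fin (Fintype.card α), i ≤ j → j ≤ k →
    T (e i) = T (e k) → T (e j) = T (e i)

/-- The edge relation of the value-equality quotient digraph of `(α, T)`: there
is an edge from label `v` to label `w` iff `v ≠ w` and some element labeled `v`
is strictly below some element labeled `w`. -/
def quotEdge {α L : Type*} [PartialOrder α] (T : α → L) (v w : L) : Prop :=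
  v ≠ w ∧ ∃ x y : α, T x = v ∧ T y = w ∧ x < y

theorem Relation.TransGen.lt_of_forall_lt {β ι : Type*} [Preorder ι] {r : β → β → Prop}
    {s : ι → β} (hr : ∀ a b, r a b → a ∈ Set.range s) (h : ∀ p q, r (s p) (s q) → p < q)
    {p q : ι} (hpq : Relation.TransGen r (s p) (s q)) : p < q := by
  suffices ∀ b, Relation.TransGen r (s p) b → ∀ q, b = s q → p < q from this _ hpq q rfl
  intro b hb
  induction hb with
  | single hab => rintro q rfl; exact h p q hab
  | @tail b _ _ hbc ih =>
    rintro q rfl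
    obtain ⟨t, rfl⟩ := hr b _ hbc
    exact (ih t rfl).trans (h t q hbc)

theorem exists_equiv_fin_strictMono_comp {α β : Type*} [Fintype α] [LinearOrder β]
    {key : α → β} (hkey : Function.Injective key) :
    ∃ e : Fin (Fintype.card α) ≃ α, StrictMono (key ∘ e) := by
  let _ : LinearOrder α := LinearOrder.lift' key hkey
  exact ⟨(Fintype.orderIsoFinOfCardEq α rfl).toEquiv,
    fun _ _ hij => (Fintype.orderIsoFinOfCardEq α rfl).strictMono hij⟩

section LabelIndex

variable {α L ι : Type*} {T : α → L} {s : ι → L} {c : α → ι}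

theorem monotone_iff_forall_transGen_quotEdge [PartialOrder α] [PartialOrder ι]
    (hc : ∀ x, s (c x) = T x) (hs : Function.Injective s) :
    Monotone c ↔ ∀ p q, Relation.TransGen (quotEdge T) (s p) (s q) → p < q := by
  have hc_eq : ∀ {x p}, T x = s p → c x = p := fun hx => hs ((hc _).trans hx)
  constructor
  · refine fun hmono p q => Relation.TransGen.lt_of_forall_lt ?_ ?_
    · rintro _ _ ⟨_, x, _, rfl, -, -⟩
      exact ⟨c x, hc x⟩
    · rintro p q ⟨hne, x, y, hx, hy, hxy⟩
      rw [← hc_eq hx, ← hc_eq hy]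
      exact (hmono hxy.le).lt_of_ne fun h => hne (by rw [← hc_eq hx, ← hc_eq hy, h])
  · intro hlt x y hxy
    obtain rfl | hxy := hxy.eq_or_lt
    · exact le_rfl
    by_cases hT : T x = T y
    · exact (hc_eq (hT.trans (hc y).symm)).le
    · refine (hlt _ _ (.single ?_)).le
      rw [hc, hc]
      exact ⟨hT, x, y, rfl, rfl, hxy⟩

theorem exists_isLinearExtension_monotone_comp_iff [Fintype α] [PartialOrder α]
    [LinearOrder ι] :
    (∃ e : Fin (Fintype.card α) ≃ α, IsLinearExtension e ∧ Monotone (c ∘ e)) ↔ Monotone c := by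
  constructor
  · rintro ⟨e, he, hmono⟩ x y hxy
    obtain rfl | hxy := hxy.eq_or_lt
    · exact le_rfl
    simpa using hmono (he (e.symm x) (e.symm y) (by simpa using hxy)).le
  · intro hc
    let key : α → ι ×ₗ LinearExtension α := fun x => toLex (c x, toLinearExtension x)
    have hkey : StrictMono key :=
      Prod.Lex.toLex_strictMono.comp <|
        (hc.prodMk toLinearExtension.monotone).strictMono_of_injective
          fun _ _ h => congrArg Prod.snd h
    obtain ⟨e, he⟩ := exists_equiv_fin_strictMono_comp (key := key)
      fun _ _ h => congrArg (fun z => (ofLex z).2) h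
    exact ⟨e, fun i j hij => he.lt_iff_lt.1 (hkey hij),
      fun i j hij => Prod.Lex.monotone_fst_ofLex (he.monotone hij)⟩

theorem forall_label_le_iff_monotone_comp [Fintype α] [Preorder ι]
    {e : Fin (Fintype.card α) ≃ α} (hc : ∀ x, s (c x) = T x) (hs : Function.Injective s) :
    (∀ i j : Fin (Fintype.card α), i ≤ j → ∀ p q, T (e i) = s p → T (e j) = s q → p ≤ q) ↔
      Monotone (c ∘ e) := by
  refine ⟨fun h i j hij => h i j hij _ _ (hc _).symm (hc _).symm, ?_⟩
  rintro hmono i j hij p q hp hq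
  rw [← hs ((hc _).trans hp), ← hs ((hc _).trans hq)]
  exact hmono hij

theorem IsContiguous.of_monotone_comp [Fintype α] [PartialOrder α] [PartialOrder ι]
    {e : Fin (Fintype.card α) ≃ α} (hc : ∀ x, s (c x) = T x) (hs : Function.Injective s)
    (hmono : Monotone (c ∘ e)) : IsContiguous T e := by
  intro i j k hij hjk hik
  have hik' : c (e k) = c (e i) := hs (by rw [hc, hc, hik])
  have hj : c (e j) = c (e i) := le_antisymm (hik' ▸ hmono hjk) (hmono hij)
  rw [← hc, ← hc, hj]

end LabelIndex

theorem stmt14_general {α L : Type*} [Fintype α] [PartialOrder α] (T : α → L)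
    (m : ℕ) (s : Fin m → L) (hs : Function.Injective s)
    (hrange : Set.range s = Set.range T) :
    (∃ e : Fin (Fintype.card α) ≃ α, IsLinearExtension e ∧ IsContiguous T e ∧
        ∀ i j : Fin (Fintype.card α), i ≤ j → ∀ p q : Fin m,
          T (e i) = s p → T (e j) = s q → p ≤ q)
    ↔ (∀ p q : Fin m, Relation.TransGen (quotEdge T) (s p) (s q) → p < q) := by
  have hlabel : ∀ x, T x ∈ Set.range s := hrange ▸ Set.mem_range_self
  choose c hc using hlabel
  rw [← monotone_iff_forall_transGen_quotEdge hc hs, ← exists_isLinearExtension_monotone_comp_iff]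
  refine exists_congr fun e => and_congr_right fun _ => ?_
  rw [forall_label_le_iff_monotone_comp hc hs]
  exact ⟨And.right, fun hmono => ⟨.of_monotone_comp hc hs hmono, hmono⟩⟩

/-- assume the value-equality quotient digraph of `(α, T)` is
acyclic, and let `<'` be the strict partial order on labels given by the
transitive closure of its edge relation. A sequence `s 0, …, s (m-1)`
enumerating exactly once each label in the image of `T` arises as the sequence
of labels read along some contiguous linear extension of `(α, T)` (collapsing
each maximal block of equal consecutive labels to a single occurrence) iff it
is a linear extension of `<'`, i.e., `s p <' s q` implies `p < q`.
(The collapsed label sequence of a contiguous linear extension `e` equals `s`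
iff labels appear along `e` in blocks ordered according to `s`, which is
expressed by the monotonicity condition in the left-hand side.) -/
theorem stmt14 {α L : Type*} [Fintype α] [PartialOrder α] (T : α → L)
    (hacyc : ∀ v : L, ¬ Relation.TransGen (quotEdge T) v v)
    (m : ℕ) (s : Fin m → L) (hs : Function.Injective s)
    (hrange : Set.range s = Set.range T) :
    (∃ e : Fin (Fintype.card α) ≃ α, IsLinearExtension e ∧ IsContiguous T e ∧
        ∀ i j : Fin (Fintype.card α), i ≤ j → ∀ p q : Fin m,
          T (e i) = s p → T (e j) = s q → p ≤ q)
    ↔ (∀ p q : Fin m, Relation.TransGen (quotEdge T) (s p) (s q) → p < q) :=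
  stmt14_general T m s hs hrange
end

section
/- Let (P, T) be a labeled finite poset whose value-equality quotient digraph G is acyclic, and let <' be the strict partial order on the labels in the image of T given by the transitive closure of the edge relation of G. Then the width of the poset (image of T, <') is at most the width of P. -/
/-- The width of a type under a relation: the supremum of the cardinalities of
its antichains. -/
noncomputable def relWidth {γ : Type*} (r : γ → γ → Prop) : ℕ :=
  sSup {n : ℕ | ∃ A : Set γ, IsAntichain r A ∧ A.ncard = n}

/-! An antichain of labels lifts, through a choice of one element per label, to an
antichain of `α` of the same size: two distinct chosen elements that were comparable
would give an edge of the quotient digraph between their labels. -/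

theorem ncard_le_relWidth {γ : Type*} [Finite γ] {s : γ → γ → Prop} {A : Set γ}
    (hA : IsAntichain s A) : A.ncard ≤ relWidth s :=
  le_csSup ⟨Nat.card γ, by rintro n ⟨B, -, rfl⟩; exact Set.ncard_le_card B⟩ ⟨A, hA, rfl⟩

theorem relWidth_le_of_injective {β γ : Type*} [Finite γ] {r : β → β → Prop}
    {s : γ → γ → Prop} (f : β → γ) (hf : Function.Injective f)
    (hrel : ∀ a b, a ≠ b → s (f a) (f b) → r a b) : relWidth r ≤ relWidth s := by
  refine csSup_le ⟨0, ∅, Set.pairwise_empty _, Set.ncard_empty β⟩ ?_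
  rintro n ⟨A, hA, rfl⟩
  have hfA : IsAntichain s (f '' A) := by
    rintro _ ⟨a, ha, rfl⟩ _ ⟨b, hb, rfl⟩ hne hs
    have hab : a ≠ b := fun h => hne (congrArg f h)
    exact hA ha hb hab (hrel a b hab hs)
  rw [← Set.ncard_image_of_injective A hf]
  exact ncard_le_relWidth hfA

theorem stmt15_general {α L : Type*} [Fintype α] [PartialOrder α] (T : α → L) :
    relWidth (fun v w : Set.range T => Relation.TransGen (quotEdge T) v.val w.val)
      ≤ relWidth ((· < ·) : α → α → Prop) := by
  refine relWidth_le_of_injective (Set.rangeSplitting T) (Set.rangeSplitting_injective T) ?_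
  intro v w hvw hlt
  exact .single ⟨Subtype.coe_ne_coe.mpr hvw, _, _, Set.apply_rangeSplitting T v,
    Set.apply_rangeSplitting T w, hlt⟩

/-- if the value-equality quotient digraph of the labeled finite
poset `(α, T)` is acyclic, then the width of the poset of labels in the image
of `T`, ordered by the transitive closure `<'` of the edge relation, is at most
the width of `α`. -/
theorem stmt15 {α L : Type*} [Fintype α] [PartialOrder α] (T : α → L)
    (hacyc : ∀ v : L, ¬ Relation.TransGen (quotEdge T) v v) :
    relWidth (fun v w : Set.range T => Relation.TransGen (quotEdge T) v.val w.val)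
      ≤ relWidth ((· < ·) : α → α → Prop) :=
  stmt15_general T
end

section
/- Let (P, T) be a labeled finite poset and let t_1 ≠ t_2 be two labels that both occur in the image of T. Then there exists a linear extension of P in which the smallest position of an element labeled t_1 is strictly smaller than every position of an element labeled t_2 (i.e., the first occurrence of t_1 precedes all occurrences of t_2) if and only if there exists an element x with T(x) = t_1 such that the transitive closure of the relation obtained from the order of P by adding the pairs (x, y) for all elements y with T(y) = t_2 is irreflexive. -/
open Relation

theorem exists_fin_equiv_symm_strictMono (α : Type*) [Fintype α] [PartialOrder α] :
    ∃ e : Fin (Fintype.card α) ≃ α, StrictMono e.symm := by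
  let : Fintype (LinearExtension α) := ‹Fintype α›
  let e := monoEquivOfFin (LinearExtension α) (Fintype.card_congr (Equiv.refl α))
  refine ⟨e.toEquiv, fun a b hab => e.symm.strictMono ?_⟩
  exact toLinearExtension.monotone.strictMono_of_injective (fun _ _ h => h) hab

theorem forall_not_transGen_self_iff_exists_fin_equiv {α : Type*} [Fintype α]
    (r : α → α → Prop) :
    (∀ z, ¬ TransGen r z z) ↔
      ∃ e : Fin (Fintype.card α) ≃ α, ∀ a b, r a b → e.symm a < e.symm b := by
  constructor
  · intro hacyclic
    have : IsStrictOrder α (TransGen r) := { irrefl := hacyclic }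
    let := partialOrderOfSO (TransGen r)
    obtain ⟨e, he⟩ := exists_fin_equiv_symm_strictMono α
    exact ⟨e, fun a b hab => he (TransGen.single hab)⟩
  · rintro ⟨e, he⟩ z hz
    have hlt : TransGen (· < ·) (e.symm z) (e.symm z) := TransGen.lift e.symm he z z hz
    rw [transGen_eq_self] at hlt
    exact lt_irrefl _ hlt

theorem isLinearExtension_iff_strictMono_symm_s17 {α : Type*} [Fintype α] [PartialOrder α]
    (e : Fin (Fintype.card α) ≃ α) : IsLinearExtension e ↔ StrictMono e.symm :=
  ⟨fun h a b hab => h _ _ (by simpa using hab), fun h i j hij => by simpa using h hij⟩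

theorem stmt17_general {α L : Type*} [Fintype α] [PartialOrder α]
    (T : α → L) (t₁ t₂ : L) :
    (∃ e : Fin (Fintype.card α) ≃ α, IsLinearExtension e ∧
        ∃ i : Fin (Fintype.card α), T (e i) = t₁ ∧
          ∀ j : Fin (Fintype.card α), T (e j) = t₂ → i < j)
    ↔ (∃ x : α, T x = t₁ ∧
        ∀ z : α, ¬ Relation.TransGen
          (fun a b : α => a < b ∨ (a = x ∧ T b = t₂)) z z) := by
  simp_rw [forall_not_transGen_self_iff_exists_fin_equiv]
  constructor
  · rintro ⟨e, he, i, hi, hfirst⟩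
    refine ⟨e i, hi, e, ?_⟩
    rintro a b (hab | ⟨rfl, hb⟩)
    · exact (isLinearExtension_iff_strictMono_symm_s17 e).1 he hab
    · simpa using hfirst (e.symm b) (by simpa using hb)
  · rintro ⟨x, hx, e, he⟩
    refine ⟨e, (isLinearExtension_iff_strictMono_symm_s17 e).2 fun a b hab => he a b (Or.inl hab),
      e.symm x, by simpa using hx, fun j hj => ?_⟩
    simpa using he x (e j) (Or.inr ⟨rfl, hj⟩)

/-- for distinct labels `t₁ ≠ t₂` both occurring in the image of
`T`, there exists a linear extension in which the first occurrence of `t₁`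
precedes all occurrences of `t₂` iff there is an element `x` labeled `t₁` such
that the transitive closure of the relation obtained from the order of `α` by
adding the pairs `(x, y)` for all `y` labeled `t₂` is irreflexive. -/
theorem stmt17 {α L : Type*} [Fintype α] [PartialOrder α]
    (T : α → L) (t₁ t₂ : L) (hne : t₁ ≠ t₂)
    (h₁ : t₁ ∈ Set.range T) (h₂ : t₂ ∈ Set.range T) :
    (∃ e : Fin (Fintype.card α) ≃ α, IsLinearExtension e ∧
        ∃ i : Fin (Fintype.card α), T (e i) = t₁ ∧
          ∀ j : Fin (Fintype.card α), T (e j) = t₂ → i < j)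
    ↔ (∃ x : α, T x = t₁ ∧
        ∀ z : α, ¬ Relation.TransGen
          (fun a b : α => a < b ∨ (a = x ∧ T b = t₂)) z z) :=
  stmt17_general T t₁ t₂
end
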